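/- Let C be a nonempty small category in which all objects are isomorphic, let x be an object of C, and let M = Hom_C(x,x) be its endomorphism monoid, regarded as a category with one object. Let J be the category with the same objects as C and exactly one morphism between each ordered pair of objects. Then C is isomorphic to the product category M × J. -/

import Mathlib

/-!
Transport along chosen isomorphisms `φ a : x ≅ a` sends `f : a ⟶ b` to the endomorphism
`φ a ≫ f ≫ (φ b)⁻¹` of `x`, giving a fully faithful functor `C ⥤ SingleObj (End x)`.
Paired with the identity-on-objects functor `C ⥤ Chaotic C` it is bijective on objects,
because `SingleObj (End x)` has a single object, and on hom-sets, because the chaotic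
category has a single morphism between any two objects.
-/

open CategoryTheory

/-- `Chaotic α`: the category with objects `α` and exactly one morphism between each
ordered pair of objects. -/
def Chaotic (α : Type u) : Type u := α

instance (α : Type u) : Category.{u} (Chaotic α) where
  Hom _ _ := PUnit
  id _ := PUnit.unit
  comp _ _ := PUnit.unit

namespace CategoryTheory

universe v u w₁ w₂

def IsoCat.toCatIso {C D : Type u} [Category.{v} C] [Category.{v} D] (e : IsoCat C D) :
    Cat.of C ≅ Cat.of D where
  hom := e.functor.toCatHom
  inv := e.inverse.toCatHom
  hom_inv_id := congrArg Functor.toCatHom e.unit_eq.symm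
  inv_hom_id := congrArg Functor.toCatHom e.counit_eq

def toChaotic (C : Type u) [Category.{v} C] : C ⥤ Chaotic C where
  obj a := a
  map _ := PUnit.unit

instance Functor.isIso_prod'_toChaotic {C : Type u} [Category.{v} C] {D : Type w₁}
    [Category.{w₂} D] [Subsingleton D] (P : C ⥤ D) [P.Full] [P.Faithful] :
    (P.prod' (toChaotic C)).IsIso where
  faithful := ⟨fun h => P.map_injective (Prod.ext_iff.1 h).1⟩
  full := ⟨fun f => ⟨P.preimage f.1, Prod.ext (P.map_preimage f.1) rfl⟩⟩
  bijective_obj := ⟨fun _ _ h => (Prod.ext_iff.1 h).2,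
    fun p => ⟨p.2, Prod.ext (Subsingleton.elim _ _) rfl⟩⟩

section

variable {C : Type u} [Category.{v} C] {x : C} (φ : ∀ a, x ≅ a)

def conjEnd : C ⥤ SingleObj (End x) where
  obj _ := SingleObj.star _
  map {a b} f := (φ a).symm.homCongr (φ b).symm f
  map_id a := by simp; rfl
  map_comp f g := Iso.homCongr_comp _ _ _ f g

def conjEndFullyFaithful : (conjEnd φ).FullyFaithful where
  preimage {a b} g := ((φ a).symm.homCongr (φ b).symm).symm g
  map_preimage := Equiv.apply_symm_apply _
  preimage_map := Equiv.symm_apply_apply _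

instance : (conjEnd φ).Full := (conjEndFullyFaithful φ).full

instance : (conjEnd φ).Faithful := (conjEndFullyFaithful φ).faithful

end

end CategoryTheory

theorem iso_singleObj_end_prod_chaotic_general
    (C : Type u) [SmallCategory C]
    (hiso : ∀ a b : C, Nonempty (a ≅ b)) (x : C) :
    Nonempty (Cat.of C ≅ Cat.of (SingleObj (End x) × Chaotic C)) :=
  ⟨((conjEnd fun a => (hiso x a).some).prod' (toChaotic C)).asIsomorphism.toCatIso⟩

theorem iso_singleObj_end_prod_chaotic
    (C : Type u) [SmallCategory C] [Nonempty C]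
    (hiso : ∀ a b : C, Nonempty (a ≅ b)) (x : C) :
    Nonempty (Cat.of C ≅ Cat.of (SingleObj (End x) × Chaotic C)) :=
  iso_singleObj_end_prod_chaotic_general C hiso x
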